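/- The map Φ restricted to 𝒴⁻ is a bijection from 𝒴⁻ onto 𝒮^T whose inverse sends S to M − S, where M n = sup_{m ≤ n} S m. Precisely: (i) for every S ∈ 𝒮^T, M − S ∈ 𝒴⁻ and Φ(M − S) = S; (ii) if Y, Ỹ ∈ 𝒴⁻ satisfy Φ Y = Φ Ỹ then Y = Ỹ; (iii) for every S ∈ 𝒮^T and every Y ∈ 𝒴 with Φ Y = S, one has M n − S n ≤ Y n for all n ∈ ℤ (i.e. M − S is the minimal carrier). -/

import Mathlib

/-- The past maximum `M n = sup_{m ≤ n} S m` of a two-sided path. -/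
noncomputable def ballMax (S : ℤ → ℤ) (n : ℤ) : ℤ := sSup (S '' Set.Iic n)

/-- `S ∈ 𝒮⁰`: a two-sided nearest-neighbour path started at `0`. -/
def inS0 (S : ℤ → ℤ) : Prop := S 0 = 0 ∧ ∀ n : ℤ, |S n - S (n - 1)| = 1

/-- `Y ∈ 𝒴`: a nonnegative carrier path. -/
def inY (Y : ℤ → ℤ) : Prop :=
  (∀ n : ℤ, 0 ≤ Y n) ∧ ∀ n : ℤ, |Y n - Y (n - 1)| = 1 ∨ (Y n = 0 ∧ Y (n - 1) = 0)

/-- `Y ∈ 𝒴⁻`: a carrier path with `liminf_{n → -∞} Y n = 0`. -/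
def inYminus (Y : ℤ → ℤ) : Prop :=
  inY Y ∧ Filter.liminf (fun n : ℤ => ((Y n : ℝ) : EReal)) Filter.atBot = 0

/-- `Φ Y = S`: the path `S` is the configuration-encoding associated with the carrier `Y`. -/
def PhiEq (Y S : ℤ → ℤ) : Prop :=
  S 0 = 0 ∧ ∀ n : ℤ, S n - S (n - 1) = if Y n = Y (n - 1) + 1 then -1 else 1

/-! Given the steps of `S`, the relation `Φ Y = S` forces the Lindley recursion
`Y n = max (Y (n - 1) - 1) 0` after an up-step of `S` and `Y n = Y (n - 1) + 1` after a down-step.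
The past maximum satisfies `M n = max (M (n - 1)) (S n)`, so `M - S` obeys this recursion, and it
vanishes whenever `S` attains its past maximum, which happens arbitrarily far in the past.
For any carrier `Y` of `S` the sum `Y + S` is nondecreasing, hence `S m ≤ Y n + S n` for `m ≤ n`,
that is `M - S ≤ Y`. Finally the recursion is monotone in the previous value, so a strict
inequality `Y' m < Y m` between two carriers propagates to every `n ≤ m` and keeps `Y` positive
there, which is incompatible with `liminf Y = 0`. -/

open Filter Set

lemma bddAbove_image_Iic_of_bddAbove {α : Type*} [SemilatticeSup α] [Nonempty α] {f : ℤ → α}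
    {a : ℤ} (h : BddAbove (f '' Iic a)) (b : ℤ) : BddAbove (f '' Iic b) := by
  refine (h.union ((finite_Icc a b).image f).bddAbove).mono ?_
  rw [← image_union]
  exact image_mono fun x (hx : x ≤ b) => by simp only [mem_union, mem_Iic, mem_Icc]; omega

lemma liminf_atBot_eq_zero_iff_frequently {ι : Type*} {l : Filter ι} {Y : ι → ℤ}
    (hY : ∀ n, 0 ≤ Y n) :
    liminf (fun n => ((Y n : ℝ) : EReal)) l = 0 ↔ ∃ᶠ n in l, Y n = 0 := by
  constructor
  · intro h
    have hlt : liminf (fun n => ((Y n : ℝ) : EReal)) l < 1 := by rw [h]; exact zero_lt_one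
    refine (frequently_lt_of_liminf_lt (by isBoundedDefault) hlt).mono fun n hn => ?_
    have : Y n < 1 := by exact_mod_cast hn
    exact le_antisymm (by omega) (hY n)
  · intro h
    refine le_antisymm (liminf_le_of_frequently_le' (h.mono fun n hn => by simp [hn])) ?_
    exact le_liminf_of_le (by isBoundedDefault) (Eventually.of_forall fun n => by
      exact_mod_cast hY n)

lemma inYminus_iff {Y : ℤ → ℤ} : inYminus Y ↔ inY Y ∧ ∃ᶠ n in atBot, Y n = 0 :=
  and_congr_right fun hY => liminf_atBot_eq_zero_iff_frequently hY.1

def carrierStep (s y : ℤ) : ℤ := if s = 1 then max (y - 1) 0 else y + 1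

lemma carrierStep_monotone (s : ℤ) : Monotone (carrierStep s) := fun y y' h => by
  unfold carrierStep; split_ifs <;> omega

lemma le_carrierStep_add {s : ℤ} (hs : s = 1 ∨ s = -1) (y : ℤ) :
    y ≤ carrierStep s y + s := by
  unfold carrierStep; split_ifs <;> omega

lemma inS0.step_eq_one_or {S : ℤ → ℤ} (hS : inS0 S) (n : ℤ) :
    S n - S (n - 1) = 1 ∨ S n - S (n - 1) = -1 :=
  abs_eq zero_le_one |>.mp (hS.2 n)

section ballMax

variable {S : ℤ → ℤ}

lemma ballMax_le {n c : ℤ} (h : ∀ m ≤ n, S m ≤ c) : ballMax S n ≤ c :=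
  csSup_le (image_nonempty.mpr nonempty_Iic) (forall_mem_image.mpr h)

lemma le_ballMax (hB : BddAbove (S '' Iic 0)) (n : ℤ) : S n ≤ ballMax S n :=
  le_csSup (bddAbove_image_Iic_of_bddAbove hB n) (mem_image_of_mem S (le_refl n : n ∈ Iic n))

lemma ballMax_eq_max (hB : BddAbove (S '' Iic 0)) (n : ℤ) :
    ballMax S n = max (ballMax S (n - 1)) (S n) := by
  have hIic : Iic n = insert n (Iic (n - 1)) := by ext x; simp; omega
  rw [ballMax, hIic, image_insert_eq, csSup_insert (bddAbove_image_Iic_of_bddAbove hB _)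
    (image_nonempty.mpr nonempty_Iic), max_comm, ballMax]

lemma frequently_ballMax_eq (hB : BddAbove (S '' Iic 0)) :
    ∃ᶠ n in atBot, ballMax S n = S n := by
  refine frequently_atBot.mpr fun m => ?_
  obtain ⟨n, hn, hSn⟩ :=
    Int.csSup_mem (image_nonempty.mpr nonempty_Iic) (bddAbove_image_Iic_of_bddAbove hB m)
  refine ⟨n, hn, le_antisymm (ballMax_le fun k hk => ?_) (le_ballMax hB n)⟩
  exact hSn ▸ le_csSup (bddAbove_image_Iic_of_bddAbove hB m)
    (mem_image_of_mem S (hk.trans hn : k ≤ m))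

lemma ballMax_sub_eq_carrierStep (hS : inS0 S) (hB : BddAbove (S '' Iic 0)) (n : ℤ) :
    ballMax S n - S n = carrierStep (S n - S (n - 1)) (ballMax S (n - 1) - S (n - 1)) := by
  have hmax := ballMax_eq_max hB n
  have hle := le_ballMax hB (n - 1)
  unfold carrierStep
  rcases hS.step_eq_one_or n with h | h
  · rw [h, if_pos rfl]; omega
  · rw [h, if_neg (by decide)]; omega

end ballMax

section PhiEq

variable {Y S : ℤ → ℤ}

lemma PhiEq.step_eq_one_or (hP : PhiEq Y S) (n : ℤ) :
    S n - S (n - 1) = 1 ∨ S n - S (n - 1) = -1 := by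
  rw [hP.2 n]; split_ifs <;> simp

lemma PhiEq.eq_carrierStep (hY : inY Y) (hP : PhiEq Y S) (n : ℤ) :
    Y n = carrierStep (S n - S (n - 1)) (Y (n - 1)) := by
  have hstep := hP.2 n
  have hmove := hY.2 n
  rw [abs_eq zero_le_one] at hmove
  have := hY.1 n
  unfold carrierStep
  split_ifs at hstep ⊢ <;> omega

lemma inY_and_phiEq_of_eq_carrierStep (hS : inS0 S) (hY : ∀ n, 0 ≤ Y n)
    (hrec : ∀ n, Y n = carrierStep (S n - S (n - 1)) (Y (n - 1))) : inY Y ∧ PhiEq Y S := by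
  have hcase : ∀ n, (S n - S (n - 1) = 1 ∧ Y n = max (Y (n - 1) - 1) 0) ∨
      (S n - S (n - 1) = -1 ∧ Y n = Y (n - 1) + 1) := fun n => by
    rcases hS.step_eq_one_or n with h | h <;> simp [hrec n, carrierStep, h]
  refine ⟨⟨hY, fun n => ?_⟩, hS.1, fun n => ?_⟩ <;> have := hY (n - 1)
  · rw [abs_eq zero_le_one]
    rcases hcase n with ⟨-, h⟩ | ⟨-, h⟩ <;> omega
  · rcases hcase n with ⟨hs, h⟩ | ⟨hs, h⟩ <;> rw [hs] <;> split_ifs <;> omega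

lemma PhiEq.monotone_add (hY : inY Y) (hP : PhiEq Y S) : Monotone (Y + S) :=
  monotone_int_of_le_succ fun n => by
    have := le_carrierStep_add (hP.step_eq_one_or (n + 1)) (Y n)
    simp only [Pi.add_apply, hP.eq_carrierStep hY (n + 1), add_sub_cancel_right] at this ⊢
    omega

lemma ballMax_sub_le_of_phiEq (hY : inY Y) (hP : PhiEq Y S) (n : ℤ) :
    ballMax S n - S n ≤ Y n := by
  suffices ballMax S n ≤ Y n + S n by omega
  exact ballMax_le fun m hm => (le_add_of_nonneg_left (hY.1 m)).trans (hP.monotone_add hY hm)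

lemma PhiEq.lt_before_of_lt {Y' : ℤ → ℤ} (hY : inY Y) (hY' : inY Y') (hP : PhiEq Y S)
    (hP' : PhiEq Y' S) {m n : ℤ} (hm : Y' m < Y m) (hn : n ≤ m) : Y' n < Y n := by
  induction n, hn using Int.leInductionDown with
  | base => exact hm
  | pred k _ ih =>
    refine (carrierStep_monotone (S k - S (k - 1))).reflect_lt ?_
    rwa [← hP.eq_carrierStep hY, ← hP'.eq_carrierStep hY']

lemma PhiEq.le_of_inYminus {Y' : ℤ → ℤ} (hY : inYminus Y) (hY' : inY Y') (hP : PhiEq Y S)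
    (hP' : PhiEq Y' S) : Y ≤ Y' := fun m => by
  by_contra! hm
  obtain ⟨n, hn, hzero⟩ := frequently_atBot.mp (inYminus_iff.mp hY).2 m
  have := hP.lt_before_of_lt hY.1 hY' hP' hm hn
  have := hY'.1 n
  omega

end PhiEq

/-- `Φ` restricted to `𝒴⁻` is a bijection onto `𝒮^T` with inverse
`S ↦ M - S`; moreover `M - S` is the pointwise minimal carrier for `S`. -/
theorem stmt_4 :
    (∀ S : ℤ → ℤ, inS0 S → BddAbove (S '' Set.Iic 0) →
      inYminus (fun n => ballMax S n - S n) ∧ PhiEq (fun n => ballMax S n - S n) S) ∧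
    (∀ Y Y' : ℤ → ℤ, inYminus Y → inYminus Y' →
      ∀ S : ℤ → ℤ, PhiEq Y S → PhiEq Y' S → Y = Y') ∧
    (∀ S : ℤ → ℤ, inS0 S → BddAbove (S '' Set.Iic 0) →
      ∀ Y : ℤ → ℤ, inY Y → PhiEq Y S → ∀ n : ℤ, ballMax S n - S n ≤ Y n) := by
  refine ⟨fun S hS hB => ?_, fun Y Y' hY hY' S hP hP' => ?_,
    fun S _ _ Y hY hP => ballMax_sub_le_of_phiEq hY hP⟩
  · obtain ⟨hY, hP⟩ := inY_and_phiEq_of_eq_carrierStep hS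
      (fun n => sub_nonneg.mpr (le_ballMax hB n)) (ballMax_sub_eq_carrierStep hS hB)
    exact ⟨inYminus_iff.mpr ⟨hY, (frequently_ballMax_eq hB).mono fun n => sub_eq_zero.mpr⟩, hP⟩
  · exact le_antisymm (hP.le_of_inYminus hY hY'.1 hP') (hP'.le_of_inYminus hY' hY.1 hP)
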